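/- For every t ≥ 1, the number of holes at level t equals ∏_{i=1}^t (b_i − 1), i.e. the cardinality of {s ∈ ℤ : 0 ≤ s < p_t and s ∉ Per_{p_t}(η)} is ∏_{i=1}^t (b_i − 1). -/

import Mathlib

open scoped BigOperators

-- The indicator function of the `\mathscr{B}`-free integers for
--`\mathscr{B} = {2^i b_i : i \ge 1}`. 
open Classical in
noncomputable def eta (b : ℕ → ℕ) : ℤ → ℕ := fun n =>
  if (∀ i : ℕ, 1 ≤ i → ¬ ((2 : ℤ) ^ i * (b i : ℤ) ∣ n)) then 1 else 0

-- `Per x s` is the set of `s`-periodic positions of `x`. 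
def Per (x : ℤ → ℕ) (s : ℕ) : Set ℤ := {n : ℤ | ∀ k : ℤ, x (n + k * s) = x n}

-- `pp b t = 2^t * b_1 * b_2 * \cdots * b_t`. 
def pp (b : ℕ → ℕ) (t : ℕ) : ℕ := 2 ^ t * ∏ i ∈ Finset.Icc 1 t, b i

/-! Write `p_t = 2^t N` with `N = b_1 ⋯ b_t` odd. Adding a multiple of `p_t` to `s` does not
change divisibility by `2^i b_i` for `i ≤ t`, so `η` is `p_t`-periodic at `s` unless `2^t ∣ s`
and no `2^i b_i` with `i ≤ t` divides `s`. Conversely, for such `s` the progression `s + p_t ℤ`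
contains a `B`-free point (whichever of `s`, `s + p_t` has odd quotient by `2^t`) and a
multiple of `2^{t+1} b_{t+1}` (as `N` is invertible modulo `2 b_{t+1}`), so `s` is a hole.
The holes are therefore the numbers `2^t m` with `0 ≤ m < N` and `b_i ∤ m` for all `i ≤ t`,
and by the Chinese remainder theorem there are `∏ (b_i - 1)` of them. -/

open Finset

theorem card_filter_Ico_zero_natCast (n : ℕ) (P : ℤ → Prop) [DecidablePred P] :
    #{s ∈ Ico (0 : ℤ) n | P s} = #{m ∈ range n | P (m : ℕ)} := by
  refine card_nbij' Int.toNat (fun m => (m : ℤ)) ?_ ?_ ?_ ?_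
  · intro s hs
    simp only [coe_filter, Set.mem_ofPred_eq, mem_Ico, mem_range] at hs ⊢
    rw [Int.toNat_of_nonneg hs.1.1]
    exact ⟨by omega, hs.2⟩
  · intro m hm; simp_all
  · intro s hs
    simp only [coe_filter, Set.mem_ofPred_eq, mem_Ico] at hs
    exact Int.toNat_of_nonneg hs.1.1
  · intro m _; simp

theorem card_filter_dvd_and_range_mul (k n : ℕ) (hk : k ≠ 0) (P : ℕ → Prop)
    [DecidablePred P] :
    #{m ∈ range (k * n) | k ∣ m ∧ P m} = #{m ∈ range n | P (k * m)} := by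
  rw [← card_image_of_injective {m ∈ range n | P (k * m)} (mul_right_injective₀ hk)]
  congr 1
  ext m
  simp only [mem_filter, mem_range, mem_image]
  constructor
  · rintro ⟨hm, ⟨j, rfl⟩, hP⟩
    exact ⟨j, ⟨lt_of_mul_lt_mul_left' hm, hP⟩, rfl⟩
  · rintro ⟨j, ⟨hj, hP⟩, rfl⟩
    exact ⟨Nat.mul_lt_mul_of_pos_left hj (Nat.pos_of_ne_zero hk), dvd_mul_right k j, hP⟩

theorem card_filter_range_natCast_zmod (n : ℕ) [NeZero n] (P : ZMod n → Prop)
    [DecidablePred P] : #{m ∈ range n | P (m : ℕ)} = #{x : ZMod n | P x} := by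
  refine card_nbij' (fun m => (m : ZMod n)) ZMod.val ?_ ?_ ?_ ?_
  · intro m hm; simp_all
  · intro x hx; simp_all [ZMod.val_lt]
  · intro m hm; simp_all [Nat.mod_eq_of_lt]
  · intro x _; simp

theorem card_filter_pi_zmod_ne_zero {ι : Type*} [Fintype ι] [DecidableEq ι] (a : ι → ℕ)
    [∀ i, NeZero (a i)] : #{y : Π i, ZMod (a i) | ∀ i, y i ≠ 0} = ∏ i, (a i - 1) := by
  have : ({y : Π i, ZMod (a i) | ∀ i, y i ≠ 0} : Finset _) =
      Fintype.piFinset fun i => univ.erase 0 := by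
    ext y; simp
  rw [this, Fintype.card_piFinset]
  simp [card_erase_of_mem]

open scoped Function in
theorem Fintype.card_filter_range_prod_not_dvd {ι : Type*} [Fintype ι] (a : ι → ℕ)
    [∀ i, NeZero (a i)] (ha : Pairwise (Nat.Coprime on a)) :
    #{m ∈ range (∏ i, a i) | ∀ i, ¬ a i ∣ m} = ∏ i, (a i - 1) := by
  classical
  have : NeZero (∏ i, a i) := ⟨prod_ne_zero_iff.mpr fun i _ => NeZero.ne (a i)⟩
  let e := ZMod.prodEquivPi a ha
  calc #{m ∈ range (∏ i, a i) | ∀ i, ¬ a i ∣ m}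
      = #{x : ZMod (∏ i, a i) | ∀ i, e x i ≠ 0} := by
        rw [← card_filter_range_natCast_zmod]
        simp [e, ZMod.natCast_eq_zero_iff]
    _ = #{y : Π i, ZMod (a i) | ∀ i, y i ≠ 0} := Finset.card_equiv e.toEquiv (by simp)
    _ = ∏ i, (a i - 1) := card_filter_pi_zmod_ne_zero a

open scoped Function in
theorem Finset.card_filter_range_prod_not_dvd {ι : Type*} (s : Finset ι) (a : ι → ℕ)
    (ha0 : ∀ i ∈ s, a i ≠ 0) (ha : (s : Set ι).Pairwise (Nat.Coprime on a)) :
    #{m ∈ range (∏ i ∈ s, a i) | ∀ i ∈ s, ¬ a i ∣ m} = ∏ i ∈ s, (a i - 1) := by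
  have : ∀ i : s, NeZero (a i) := fun i => ⟨ha0 i i.2⟩
  have := Fintype.card_filter_range_prod_not_dvd (fun i : s => a i)
    (fun i j hij => ha i.2 j.2 (Subtype.coe_ne_coe.mpr hij))
  rw [prod_coe_sort s a, prod_coe_sort s (fun i => a i - 1)] at this
  simpa only [Subtype.forall] using this

theorem Nat.pow_mul_dvd_pow_mul_iff {a b i t m : ℕ} (hb : b.Coprime a) (hi : i ≤ t) :
    a ^ i * b ∣ a ^ t * m ↔ b ∣ m :=
  ⟨fun h => (hb.pow_right t).dvd_of_dvd_mul_left ((dvd_mul_left b _).trans h),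
    fun h => mul_dvd_mul (pow_dvd_pow a hi) h⟩

def IsBFree (b : ℕ → ℕ) (n : ℤ) : Prop :=
  ∀ i : ℕ, 1 ≤ i → ¬ (2 : ℤ) ^ i * (b i : ℤ) ∣ n

theorem mem_Per_eta_iff (b : ℕ → ℕ) (p : ℕ) (s : ℤ) :
    s ∈ Per (eta b) p ↔ ∀ k : ℤ, (IsBFree b (s + k * p) ↔ IsBFree b s) := by
  refine forall_congr' fun k => ?_
  unfold eta
  split_ifs <;> unfold IsBFree <;> tauto

section Holes

variable {b : ℕ → ℕ} {t : ℕ}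

theorem natCast_pp (b : ℕ → ℕ) (t : ℕ) :
    (pp b t : ℤ) = 2 ^ t * ∏ i ∈ Icc 1 t, (b i : ℤ) := by
  simp [pp]

theorem two_pow_mul_dvd_pp {i : ℕ} (hi : i ∈ Icc 1 t) : (2 : ℤ) ^ i * b i ∣ pp b t := by
  rw [natCast_pp]
  exact mul_dvd_mul (pow_dvd_pow 2 (mem_Icc.1 hi).2) (dvd_prod_of_mem _ hi)

theorem two_pow_dvd_pp : (2 : ℤ) ^ t ∣ pp b t := by
  rw [natCast_pp]
  exact dvd_mul_right _ _

theorem two_pow_mul_dvd_add_mul_pp_iff {i : ℕ} (hi : i ∈ Icc 1 t) (s k : ℤ) :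
    (2 : ℤ) ^ i * b i ∣ s + k * pp b t ↔ (2 : ℤ) ^ i * b i ∣ s :=
  dvd_add_left ((two_pow_mul_dvd_pp hi).mul_left k)

theorem isBFree_iff_of_not_two_pow_succ_dvd {n : ℤ} (h : ¬ (2 : ℤ) ^ (t + 1) ∣ n) :
    IsBFree b n ↔ ∀ i ∈ Icc 1 t, ¬ (2 : ℤ) ^ i * b i ∣ n := by
  refine ⟨fun hn i hi => hn i (mem_Icc.1 hi).1, fun hn i hi1 hdvd => ?_⟩
  rcases le_or_gt i t with hit | hti
  · exact hn i (mem_Icc.2 ⟨hi1, hit⟩) hdvd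
  · exact h ((pow_dvd_pow 2 hti).trans ((dvd_mul_right _ _).trans hdvd))

theorem isBFree_add_mul_pp_iff {s : ℤ} (h : ¬ (2 : ℤ) ^ t ∣ s) (k : ℤ) :
    IsBFree b (s + k * pp b t) ↔ IsBFree b s := by
  have hpow : (2 : ℤ) ^ t ∣ 2 ^ (t + 1) := pow_dvd_pow 2 t.le_succ
  have hs : ¬ (2 : ℤ) ^ t ∣ s + k * pp b t := by
    rwa [dvd_add_left (two_pow_dvd_pp.mul_left k)]
  rw [isBFree_iff_of_not_two_pow_succ_dvd fun h' => hs (hpow.trans h'),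
    isBFree_iff_of_not_two_pow_succ_dvd fun h' => h (hpow.trans h')]
  exact forall₂_congr fun i hi => not_congr (two_pow_mul_dvd_add_mul_pp_iff hi s k)

theorem not_two_pow_succ_dvd_two_pow_mul {m : ℤ} (hm : Odd m) :
    ¬ (2 : ℤ) ^ (t + 1) ∣ 2 ^ t * m := by
  rw [pow_succ, mul_dvd_mul_iff_left (pow_ne_zero t two_ne_zero), ← even_iff_two_dvd,
    Int.not_even_iff_odd]
  exact hm

variable (hodd : ∀ i : ℕ, 1 ≤ i → Odd (b i))
    (hcop : ∀ i j : ℕ, 1 ≤ i → 1 ≤ j → i ≠ j → Nat.Coprime (b i) (b j))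
include hodd hcop

theorem isCoprime_prod_two_mul : IsCoprime (∏ i ∈ Icc 1 t, (b i : ℤ)) (2 * b (t + 1)) := by
  refine IsCoprime.prod_left fun i hi => IsCoprime.mul_right ?_ ?_
  · exact Int.isCoprime_two_right.2 (by exact_mod_cast hodd i (mem_Icc.1 hi).1)
  · exact Nat.isCoprime_iff_coprime.2 <|
      hcop i (t + 1) (mem_Icc.1 hi).1 t.succ_pos (by have := (mem_Icc.1 hi).2; omega)

theorem exists_isBFree_add_mul_pp {s : ℤ} (h : (2 : ℤ) ^ t ∣ s)
    (hs : ∀ i ∈ Icc 1 t, ¬ (2 : ℤ) ^ i * b i ∣ s) :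
    ∃ k : ℤ, IsBFree b (s + k * pp b t) := by
  obtain ⟨s', rfl⟩ := h
  have hN : Odd (∏ i ∈ Icc 1 t, (b i : ℤ)) :=
    Int.isCoprime_two_right.1 (isCoprime_prod_two_mul hodd hcop).of_mul_right_left
  obtain ⟨k, hk⟩ : ∃ k : ℤ, Odd (s' + k * ∏ i ∈ Icc 1 t, (b i : ℤ)) := by
    rcases Int.even_or_odd s' with he | ho
    · exact ⟨1, by simpa using he.add_odd hN⟩
    · exact ⟨0, by simpa using ho⟩
  refine ⟨k, (isBFree_iff_of_not_two_pow_succ_dvd (t := t) ?_).2 fun i hi => ?_⟩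
  · rw [natCast_pp]
    convert not_two_pow_succ_dvd_two_pow_mul hk using 2
    ring
  · rw [two_pow_mul_dvd_add_mul_pp_iff hi]
    exact hs i hi

theorem exists_not_isBFree_add_mul_pp {s : ℤ} (h : (2 : ℤ) ^ t ∣ s) :
    ∃ k : ℤ, ¬ IsBFree b (s + k * pp b t) := by
  obtain ⟨s', rfl⟩ := h
  obtain ⟨u, v, huv⟩ := isCoprime_prod_two_mul (t := t) hodd hcop
  refine ⟨-(s' * u), fun hfree => hfree (t + 1) t.succ_pos ⟨s' * v, ?_⟩⟩
  rw [natCast_pp]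
  linear_combination (-(2 ^ t * s')) * huv

theorem notMem_Per_eta_pp_iff (s : ℤ) :
    s ∉ Per (eta b) (pp b t) ↔
      (2 : ℤ) ^ t ∣ s ∧ ∀ i ∈ Icc 1 t, ¬ (2 : ℤ) ^ i * b i ∣ s := by
  rw [mem_Per_eta_iff]
  constructor
  · intro hper
    by_contra hhole
    refine hper fun k => ?_
    rcases not_and_or.1 hhole with h | h
    · exact isBFree_add_mul_pp_iff h k
    · push Not at h
      obtain ⟨i, hi, hdvd⟩ := h
      have hi1 := (mem_Icc.1 hi).1
      exact iff_of_false
        (fun hfree => hfree i hi1 ((two_pow_mul_dvd_add_mul_pp_iff hi s k).2 hdvd))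
        (fun hfree => hfree i hi1 hdvd)
  · rintro ⟨h, hs⟩ hper
    obtain ⟨k₁, hk₁⟩ := exists_isBFree_add_mul_pp hodd hcop h hs
    obtain ⟨k₂, hk₂⟩ := exists_not_isBFree_add_mul_pp hodd hcop h
    exact hk₂ ((hper k₂).2 ((hper k₁).1 hk₁))

end Holes

open Classical in
theorem card_holes_general (b : ℕ → ℕ)
    (hodd : ∀ i : ℕ, 1 ≤ i → Odd (b i))
    (hcop : ∀ i j : ℕ, 1 ≤ i → 1 ≤ j → i ≠ j → Nat.Coprime (b i) (b j))
    (t : ℕ) :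
    ((Finset.Ico (0 : ℤ) (pp b t)).filter
        (fun s => s ∉ Per (eta b) (pp b t))).card =
      ∏ i ∈ Finset.Icc 1 t, (b i - 1) := by
  have hodd' : ∀ i ∈ Icc 1 t, Odd (b i) := fun i hi => hodd i (mem_Icc.1 hi).1
  calc #{s ∈ Ico (0 : ℤ) (pp b t) | s ∉ Per (eta b) (pp b t)}
      = #{m ∈ range (2 ^ t * ∏ i ∈ Icc 1 t, b i) |
          2 ^ t ∣ m ∧ ∀ i ∈ Icc 1 t, ¬ 2 ^ i * b i ∣ m} := by
        simp_rw [notMem_Per_eta_pp_iff hodd hcop, card_filter_Ico_zero_natCast, pp]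
        norm_cast
    _ = #{m ∈ range (∏ i ∈ Icc 1 t, b i) | ∀ i ∈ Icc 1 t, ¬ 2 ^ i * b i ∣ 2 ^ t * m} :=
        card_filter_dvd_and_range_mul _ _ (pow_ne_zero t two_ne_zero) _
    _ = #{m ∈ range (∏ i ∈ Icc 1 t, b i) | ∀ i ∈ Icc 1 t, ¬ b i ∣ m} := by
        refine congrArg card (ext fun m => ?_)
        simp only [mem_filter]
        refine and_congr_right fun _ => forall₂_congr fun i hi => ?_
        rw [Nat.pow_mul_dvd_pow_mul_iff (hodd' i hi).coprime_two_right (mem_Icc.1 hi).2]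
    _ = ∏ i ∈ Icc 1 t, (b i - 1) := by
        convert card_filter_range_prod_not_dvd _ _ (fun i hi => (hodd' i hi).pos.ne')
          fun i hi j hj hij => hcop i j (mem_Icc.1 hi).1 (mem_Icc.1 hj).1 hij

open Classical in
theorem card_holes (b : ℕ → ℕ)
    (hodd : ∀ i : ℕ, 1 ≤ i → Odd (b i))
    (hgt : ∀ i : ℕ, 1 ≤ i → 1 < b i)
    (hcop : ∀ i j : ℕ, 1 ≤ i → 1 ≤ j → i ≠ j → Nat.Coprime (b i) (b j))
    (t : ℕ) (ht : 1 ≤ t) :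
    ((Finset.Ico (0 : ℤ) (pp b t)).filter
        (fun s => s ∉ Per (eta b) (pp b t))).card =
      ∏ i ∈ Finset.Icc 1 t, (b i - 1) :=
  card_holes_general b hodd hcop t
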